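/- arXiv:2601.13030 — 3 statements merged into one kernel-verified Lean document; each statement's English description precedes it below -/
import Mathlib

section
/- Let (X, d) be a metric space with d ≤ 1, G a topological group with a bi-invariant compatible metric d_G ≤ 1, and φ : X → G a 1-Lipschitz map with d_G(1, φ(x)) ≤ d(x, e) := 1 for all x. Extend φ to X̄ by φ(e) = 1 and φ(x⁻¹) = φ(x)⁻¹. Then the unique group homomorphism Φ : F(X) → G extending φ satisfies d_G(Φ(w), 1) ≤ δ(w, e) for every w ∈ F(X), where δ is the Graev metric on F(X); in particular Φ is 1-Lipschitz and continuous. -/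
/-!
For a non-crossing match θ of `w`, the letters of `w^θ` cancel in nested pairs
`x … x⁻¹`, so `Φ(w^θ) = 1`. Bi-invariance of `d_G` lets one change a product one letter at
a time, giving `d_G(Φ u, Φ v) ≤ ρ(u, v)` for words of equal length, since `φ` extended to
`X̄` is 1-Lipschitz for the extended metric. Hence `d_G(Φ w, 1) = d_G(Φ w, Φ w^θ) ≤ ρ(w, w^θ)`
for every match, and so `d_G(Φ w, 1) ≤ N(w)`. Finally `d_G(Φ u, Φ v) = d_G(Φ(u⁻¹v), 1)`
by bi-invariance once more.
-/

/-- The set X̄ = X ∪ X⁻¹ ∪ {e}: a formal copy `neg x` of each `pos x`, plus a new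
neutral letter `e`. -/
inductive Bar (X : Type*) where
  | pos : X → Bar X
  | neg : X → Bar X
  | e : Bar X
  deriving DecidableEq

/-- Formal inverse on X̄, with e⁻¹ = e. -/
def Bar.inv {X : Type*} : Bar X → Bar X
  | pos x => neg x
  | neg x => pos x
  | e => e

/-- The extension of a metric `d` on `X` to `X̄`: the copy `X⁻¹` is isometric to `X`,
and all distances between distinct types (X, X⁻¹, {e}) equal 1. -/
def barDist {X : Type*} (d : X → X → ℝ) : Bar X → Bar X → ℝ
  | Bar.pos x, Bar.pos y => d x y
  | Bar.neg x, Bar.neg y => d x y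
  | Bar.e, Bar.e => 0
  | _, _ => 1

/-- Words over X̄ (possibly with occurrences of the letter e). -/
abbrev Word (X : Type*) := List (Bar X)

/-- A word is irreducible (reduced) if it has no letter e and no adjacent pair x x⁻¹. -/
def Reduced {X : Type*} (w : Word X) : Prop :=
  (∀ a ∈ w, a ≠ Bar.e) ∧ w.Chain' (fun a b => b ≠ Bar.inv a)

/-- Reduction of a word: successively cancel adjacent inverse pairs and delete e's.
Elements of the free group F(X) are identified with reduced words. -/
def reduceWord {X : Type*} [DecidableEq X] : Word X → Word X
  | [] => []
  | a :: w =>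
    match reduceWord w with
    | [] => if a = Bar.e then [] else [a]
    | b :: t => if a = Bar.e then b :: t else if b = Bar.inv a then t else a :: b :: t

/-- The formal inverse of a word. -/
def wordInv {X : Type*} (w : Word X) : Word X := (w.reverse).map Bar.inv

/-- A match on `{m, ..., n}`: an involution of the interval with no crossing, i.e.
there are no `i < j < θ i < θ j` within the interval. -/
def IsMatch (m n : ℕ) (θ : ℕ → ℕ) : Prop :=
  (∀ i, m ≤ i → i ≤ n → m ≤ θ i ∧ θ i ≤ n) ∧
  (∀ i, m ≤ i → i ≤ n → θ (θ i) = i) ∧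
  (¬ ∃ i j, m ≤ i ∧ i < j ∧ j ≤ n ∧ j < θ i ∧ θ i < θ j)

/-- The word w^θ: `x_i^θ = x_i` if `θ i > i`, `e` if `θ i = i`, and `x_{θ i}⁻¹` if
`θ i < i`. -/
def wordMatch {X : Type*} (θ : ℕ → ℕ) (w : Word X) : Word X :=
  (List.range w.length).map fun i =>
    if i < θ i then w.getD i Bar.e
    else if θ i = i then Bar.e
    else Bar.inv (w.getD (θ i) Bar.e)

/-- ρ(u, v): the sum of the coordinatewise distances between two words. -/
def rho {X : Type*} (d : X → X → ℝ) (u v : Word X) : ℝ :=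
  (List.zipWith (barDist d) u v).sum

/-- The Graev norm of a reduced word w: the infimum (a minimum) over matches θ on
`{0, ..., |w| - 1}` of ρ(w, w^θ). -/
noncomputable def graevNorm {X : Type*} (d : X → X → ℝ) (w : Word X) : ℝ :=
  sInf {r : ℝ | ∃ θ : ℕ → ℕ, IsMatch 0 (w.length - 1) θ ∧ r = rho d w (wordMatch θ w)}

/-- The Graev metric δ on F(X): δ(u, v) = N(u⁻¹ v) where u, v are reduced words. -/
noncomputable def graevDist {X : Type*} [DecidableEq X] (d : X → X → ℝ)
    (u v : Word X) : ℝ :=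
  graevNorm d (reduceWord (wordInv u ++ v))

/-- The extension of φ : X → G to X̄, with φ(e) = 1 and φ(x⁻¹) = φ(x)⁻¹. -/
def barMap {X G : Type*} [Group G] (φ : X → G) : Bar X → G
  | Bar.pos x => φ x
  | Bar.neg x => (φ x)⁻¹
  | Bar.e => 1

section BiInvariant

variable {G : Type*} [Group G] (dG : G → G → ℝ)

lemma dist_inv_inv_of_biInvariant
    (hbi : ∀ a b g h : G, dG (a * g * b) (a * h * b) = dG g h) (g h : G) :
    dG g⁻¹ h⁻¹ = dG h g := by
  rw [← hbi g⁻¹ h⁻¹ h g]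
  congr 1 <;> group

lemma dist_eq_dist_inv_mul_one_of_biInvariant (hGsymm : ∀ g h, dG g h = dG h g)
    (hbi : ∀ a b g h : G, dG (a * g * b) (a * h * b) = dG g h) (g h : G) :
    dG g h = dG (g⁻¹ * h) 1 := by
  rw [← hbi g⁻¹ 1 g h, hGsymm]
  congr 1 <;> group

lemma dist_prod_map_le_sum_zipWith {α : Type*} (hGrefl : ∀ g, dG g g = 0)
    (hGtri : ∀ g h k, dG g k ≤ dG g h + dG h k)
    (hbi : ∀ a b g h : G, dG (a * g * b) (a * h * b) = dG g h)
    (f : α → G) (D : α → α → ℝ) (hf : ∀ a b, dG (f a) (f b) ≤ D a b) :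
    ∀ u v : List α, u.length = v.length →
      dG (u.map f).prod (v.map f).prod ≤ (List.zipWith D u v).sum
  | [], [], _ => by simp [hGrefl]
  | a :: u, b :: v, huv => by
    have hleft : dG (f a * (u.map f).prod) (f a * (v.map f).prod) =
        dG (u.map f).prod (v.map f).prod := by
      simpa using hbi (f a) 1 (u.map f).prod (v.map f).prod
    have hright : dG (f a * (v.map f).prod) (f b * (v.map f).prod) = dG (f a) (f b) := by
      simpa using hbi 1 (v.map f).prod (f a) (f b)
    have htail := dist_prod_map_le_sum_zipWith hGrefl hGtri hbi f D hf u v (by simpa using huv)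
    simp only [List.map_cons, List.prod_cons, List.zipWith_cons_cons, List.sum_cons]
    linarith [hGtri (f a * (u.map f).prod) (f a * (v.map f).prod) (f b * (v.map f).prod),
      hf a b]

end BiInvariant

section NonCrossingMatch

lemma IsMatch.restrict {m n m' n' : ℕ} {θ : ℕ → ℕ} (h : IsMatch m n θ)
    (hm : m ≤ m') (hn : n' ≤ n) (hmaps : ∀ i, m' ≤ i → i ≤ n' → m' ≤ θ i ∧ θ i ≤ n') :
    IsMatch m' n' θ := by
  obtain ⟨-, hinv, hnc⟩ := h
  refine ⟨hmaps, fun i hi₁ hi₂ => hinv i (by omega) (by omega), ?_⟩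
  rintro ⟨i, j, hi, hij, hj, hjθi, hθij⟩
  exact hnc ⟨i, j, by omega, hij, by omega, hjθi, hθij⟩

lemma isMatch_id (n : ℕ) : IsMatch 0 n id :=
  ⟨fun _ _ hi => ⟨Nat.zero_le _, hi⟩, fun _ _ _ => rfl,
    fun ⟨_, _, _, hij, _, hji, _⟩ => absurd hij (Nat.lt_asymm hji)⟩

lemma List.range'_eq_range'_append_range' {m k n : ℕ} (h₁ : m ≤ k) (h₂ : k ≤ n) :
    List.range' m (n - m) = List.range' m (k - m) ++ List.range' k (n - k) := by
  have h := @List.range'_append_1 m (k - m) (n - k)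
  rw [Nat.add_sub_cancel' h₁] at h
  rw [h]
  congr 1
  omega

/-- The letter of `w^θ` at position `i`, with `f i` standing for the image of the `i`-th
letter of `w`. -/
def matchedLetter {G : Type*} [Group G] (f : ℕ → G) (θ : ℕ → ℕ) (i : ℕ) : G :=
  if i < θ i then f i else if θ i = i then 1 else (f (θ i))⁻¹

/-- If `θ m = m` the letter at `m` is trivial; otherwise `θ m = k > m`, the letters at `m` and
`k` are `f m` and `(f m)⁻¹`, and since `θ` is non-crossing it restricts to matches of
`{m+1, …, k-1}` and of `{k+1, …, n}`, which have trivial product by induction. -/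
theorem IsMatch.prod_matchedLetter {G : Type*} [Group G] (f : ℕ → G) {θ : ℕ → ℕ} :
    ∀ {m n : ℕ}, IsMatch m n θ →
      ((List.range' m (n + 1 - m)).map (matchedLetter f θ)).prod = 1 := by
  intro m n h
  induction hlen : n + 1 - m using Nat.strong_induction_on generalizing m n with
  | _ len ih =>
  subst hlen
  by_cases hmn : m ≤ n
  swap
  · simp [show n + 1 - m = 0 by omega]
  have hcons : List.range' m (n + 1 - m) = m :: List.range' (m + 1) (n + 1 - (m + 1)) := by
    rw [show n + 1 - m = n + 1 - (m + 1) + 1 by omega, List.range'_succ]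
  obtain ⟨hrange, hinv, hnc⟩ := h
  rcases (hrange m le_rfl hmn).1.eq_or_lt with hfix | hlt
  · have hrest : IsMatch (m + 1) n θ := by
      refine IsMatch.restrict ⟨hrange, hinv, hnc⟩ (Nat.le_succ m) le_rfl fun i hi₁ hi₂ => ?_
      have := hrange i (by omega) hi₂
      have hθi := hinv i (by omega) hi₂
      have : θ i ≠ m := fun h => by rw [h] at hθi; omega
      omega
    rw [hcons, List.map_cons, List.prod_cons, ih _ (by omega) hrest rfl, mul_one,
      matchedLetter, if_neg (by omega), if_pos hfix.symm]
  · set k := θ m with hk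
    have hkn : k ≤ n := (hrange m le_rfl hmn).2
    have hθk : θ k = m := hinv m le_rfl hmn
    have hinner : IsMatch (m + 1) (k - 1) θ := by
      refine IsMatch.restrict ⟨hrange, hinv, hnc⟩ (Nat.le_succ m) (by omega) fun i hi₁ hi₂ => ?_
      have := hrange i (by omega) (by omega)
      have hθi := hinv i (by omega) (by omega)
      have : θ i ≠ m := fun h => by rw [h] at hθi; omega
      have : θ i ≠ k := fun h => by rw [h] at hθi; omega
      have : ¬ k < θ i := fun h => hnc ⟨m, i, le_rfl, by omega, by omega, by omega, h⟩
      omega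
    have houter : IsMatch (k + 1) n θ := by
      refine IsMatch.restrict ⟨hrange, hinv, hnc⟩ (by omega) le_rfl fun j hj₁ hj₂ => ?_
      have := hrange j (by omega) hj₂
      have hθj := hinv j (by omega) hj₂
      have : θ j ≠ m := fun h => by rw [h] at hθj; omega
      have : θ j ≠ k := fun h => by rw [h] at hθj; omega
      have : ¬ θ j < k := fun h =>
        hnc ⟨m, θ j, le_rfl, by omega, by omega, h, by omega⟩
      omega
    have hsplit : List.range' m (n + 1 - m) =
        m :: (List.range' (m + 1) (k - 1 + 1 - (m + 1)) ++ [k]) ++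
          List.range' (k + 1) (n + 1 - (k + 1)) := by
      rw [List.range'_eq_range'_append_range' (k := k + 1) (by omega) (by omega),
        show k + 1 - m = k - 1 + 1 - (m + 1) + 1 + 1 by omega, List.range'_succ,
        List.range'_concat]
      congr 4
      omega
    have hm : matchedLetter f θ m = f m := if_pos hlt
    have hk : matchedLetter f θ k = (f m)⁻¹ := by
      rw [matchedLetter, if_neg (by omega), if_neg (by omega), hθk]
    rw [hsplit]
    simp only [List.map_append, List.map_cons, List.map_nil, List.prod_append,
      List.prod_cons, List.prod_nil, ih _ (by omega) hinner rfl, ih _ (by omega) houter rfl,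
      hm, hk]
    group

end NonCrossingMatch

section FreeGroupHom

variable {X G : Type*} [Group G] (φ : X → G)

lemma barMap_inv (a : Bar X) : barMap φ a.inv = (barMap φ a)⁻¹ := by
  cases a <;> simp [barMap, Bar.inv]

lemma prod_map_barMap_reduceWord [DecidableEq X] (w : Word X) :
    ((reduceWord w).map (barMap φ)).prod = (w.map (barMap φ)).prod := by
  induction w with
  | nil => rfl
  | cons a w ih =>
    rw [reduceWord]
    rcases hrw : reduceWord w with _ | ⟨b, t⟩ <;> rw [hrw] at ih
    · by_cases ha : a = Bar.e <;> simp [ha, barMap, ← ih]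
    · by_cases ha : a = Bar.e
      · simp [ha, barMap, ← ih]
      by_cases hb : b = a.inv
      · simp only [if_neg ha, if_pos hb]
        rw [List.map_cons, List.prod_cons, ← ih, hb, List.map_cons, List.prod_cons, barMap_inv,
          mul_inv_cancel_left]
      · simp [ha, hb, ← ih]

lemma prod_map_barMap_wordInv (u : Word X) :
    ((wordInv u).map (barMap φ)).prod = ((u.map (barMap φ)).prod)⁻¹ := by
  induction u with
  | nil => simp [wordInv]
  | cons a u ih =>
    have h : wordInv (a :: u) = wordInv u ++ [a.inv] := by simp [wordInv]
    rw [h, List.map_append, List.prod_append, ih]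
    simp [barMap_inv]

lemma map_barMap_wordMatch (θ : ℕ → ℕ) (w : Word X) :
    (wordMatch θ w).map (barMap φ) =
      (List.range w.length).map (matchedLetter (fun i => barMap φ (w.getD i Bar.e)) θ) := by
  rw [wordMatch, List.map_map]
  refine List.map_congr_left fun i _ => ?_
  simp only [Function.comp_apply, matchedLetter]
  split_ifs
  · rfl
  · rfl
  · exact barMap_inv φ _

lemma prod_map_barMap_wordMatch {w : Word X} {θ : ℕ → ℕ} (hθ : IsMatch 0 (w.length - 1) θ) :
    ((wordMatch θ w).map (barMap φ)).prod = 1 := by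
  rcases w with _ | ⟨a, t⟩
  · simp [wordMatch]
  have hlen : (a :: t).length = (a :: t).length - 1 + 1 - 0 := by simp
  rw [map_barMap_wordMatch, List.range_eq_range', hlen]
  exact hθ.prod_matchedLetter _

lemma dist_barMap_le_barDist (dG : G → G → ℝ) (d : X → X → ℝ) (hGrefl : ∀ g, dG g g = 0)
    (hGsymm : ∀ g h, dG g h = dG h g) (hGbd : ∀ g h, dG g h ≤ 1)
    (hbi : ∀ a b g h : G, dG (a * g * b) (a * h * b) = dG g h)
    (hlip : ∀ x y, dG (φ x) (φ y) ≤ d x y) (a b : Bar X) :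
    dG (barMap φ a) (barMap φ b) ≤ barDist d a b := by
  cases a <;> cases b <;> simp only [barMap, barDist]
  all_goals first
    | exact hGbd _ _
    | exact hlip _ _
    | exact (hGrefl 1).le
    | rw [dist_inv_inv_of_biInvariant dG hbi, hGsymm]; exact hlip _ _

end FreeGroupHom

lemma dist_prod_map_barMap_one_le_graevNorm {X G : Type*} [Group G] (d : X → X → ℝ)
    (dG : G → G → ℝ) (hGrefl : ∀ g, dG g g = 0) (hGsymm : ∀ g h, dG g h = dG h g)
    (hGtri : ∀ g h k, dG g k ≤ dG g h + dG h k) (hGbd : ∀ g h, dG g h ≤ 1)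
    (hbi : ∀ a b g h : G, dG (a * g * b) (a * h * b) = dG g h)
    (φ : X → G) (hlip : ∀ x y, dG (φ x) (φ y) ≤ d x y) (w : Word X) :
    dG (w.map (barMap φ)).prod 1 ≤ graevNorm d w := by
  refine le_csInf ⟨_, id, isMatch_id _, rfl⟩ ?_
  rintro r ⟨θ, hθ, rfl⟩
  rw [← prod_map_barMap_wordMatch φ hθ]
  exact dist_prod_map_le_sum_zipWith dG hGrefl hGtri hbi (barMap φ) (barDist d)
    (dist_barMap_le_barDist φ dG d hGrefl hGsymm hGbd hbi hlip) w (wordMatch θ w)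
    (by simp [wordMatch])

theorem stmt14_general {X G : Type*} [DecidableEq X] [Group G]
    (d : X → X → ℝ)
    (dG : G → G → ℝ)
    (hGrefl : ∀ g, dG g g = 0)
    (hGsymm : ∀ g h, dG g h = dG h g) (hGtri : ∀ g h k, dG g k ≤ dG g h + dG h k)
    (hGbd : ∀ g h, dG g h ≤ 1)
    (hbi : ∀ a b g h : G, dG (a * g * b) (a * h * b) = dG g h)
    (φ : X → G)
    (hlip : ∀ x y, dG (φ x) (φ y) ≤ d x y) :
    -- Φ is the homomorphism extending φ
    (∀ x, (([Bar.pos x] : Word X).map (barMap φ)).prod = φ x) ∧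
    (∀ u v : Word X, ((reduceWord (u ++ v)).map (barMap φ)).prod =
      (u.map (barMap φ)).prod * (v.map (barMap φ)).prod) ∧
    -- the norm estimate d_G(Φ w, 1) ≤ δ(w, e) = N(w)
    (∀ w : Word X, Reduced w → dG ((w.map (barMap φ)).prod) 1 ≤ graevNorm d w) ∧
    -- Φ is 1-Lipschitz for the Graev metric
    (∀ u v : Word X, Reduced u → Reduced v →
      dG ((u.map (barMap φ)).prod) ((v.map (barMap φ)).prod) ≤ graevDist d u v) := by
  have hnorm := dist_prod_map_barMap_one_le_graevNorm d dG hGrefl hGsymm hGtri hGbd hbi φ hlip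
  refine ⟨fun x => by simp [barMap], fun u v => ?_, fun w _ => hnorm w, fun u v _ _ => ?_⟩
  · rw [prod_map_barMap_reduceWord, List.map_append, List.prod_append]
  · have hprod : ((reduceWord (wordInv u ++ v)).map (barMap φ)).prod =
        (u.map (barMap φ)).prod⁻¹ * (v.map (barMap φ)).prod := by
      rw [prod_map_barMap_reduceWord, List.map_append, List.prod_append, prod_map_barMap_wordInv]
    rw [dist_eq_dist_inv_mul_one_of_biInvariant dG hGsymm hbi, ← hprod]
    exact hnorm _

/-- G a group with a bi-invariant metric d_G ≤ 1, φ : X → G 1-Lipschitz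
with d_G(1, φ x) ≤ 1. Then the unique homomorphism Φ : F(X) → G extending φ (given on a
reduced word by the product of the images of its letters) satisfies
d_G(Φ(w), 1) ≤ δ(w, e); in particular Φ is 1-Lipschitz (hence continuous) for the Graev
metric δ. -/
theorem stmt14 {X G : Type*} [DecidableEq X] [Group G]
    (d : X → X → ℝ)
    (hrefl : ∀ x, d x x = 0) (heq : ∀ x y, d x y = 0 → x = y)
    (hsymm : ∀ x y, d x y = d y x) (htri : ∀ x y z, d x z ≤ d x y + d y z)
    (hbd : ∀ x y, d x y ≤ 1)
    (dG : G → G → ℝ)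
    (hGrefl : ∀ g, dG g g = 0) (hGeq : ∀ g h, dG g h = 0 → g = h)
    (hGsymm : ∀ g h, dG g h = dG h g) (hGtri : ∀ g h k, dG g k ≤ dG g h + dG h k)
    (hGbd : ∀ g h, dG g h ≤ 1)
    (hbi : ∀ a b g h : G, dG (a * g * b) (a * h * b) = dG g h)
    (φ : X → G)
    (hlip : ∀ x y, dG (φ x) (φ y) ≤ d x y)
    (hφe : ∀ x, dG 1 (φ x) ≤ 1) :
    -- Φ is the homomorphism extending φ
    (∀ x, (([Bar.pos x] : Word X).map (barMap φ)).prod = φ x) ∧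
    (∀ u v : Word X, ((reduceWord (u ++ v)).map (barMap φ)).prod =
      (u.map (barMap φ)).prod * (v.map (barMap φ)).prod) ∧
    -- the norm estimate d_G(Φ w, 1) ≤ δ(w, e) = N(w)
    (∀ w : Word X, Reduced w → dG ((w.map (barMap φ)).prod) 1 ≤ graevNorm d w) ∧
    -- Φ is 1-Lipschitz for the Graev metric
    (∀ u v : Word X, Reduced u → Reduced v →
      dG ((u.map (barMap φ)).prod) ((v.map (barMap φ)).prod) ≤ graevDist d u v) :=
  stmt14_general d dG hGrefl hGsymm hGtri hGbd hbi φ hlip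
end

section
/- Let (X,d) be a metric space with d ≤ 1 and let δ be the Graev metric on F(X). For any reduced word w = x₀⋯x_n and any match θ on {0,...,n}, the word w^θ (defined coordinatewise by x_i^θ = x_i if θ(i) > i, e if θ(i) = i, x_{θ(i)}^{-1} if θ(i) < i) reduces to the neutral element e of F(X). -/
/-! A match pairs position `m` with `θ m`; by non-crossing, the positions strictly between
them and those after `θ m` are again matched among themselves. So `w^θ` is a balanced word:
`x_m (balanced) x_m⁻¹ (balanced)`, or `e (balanced)` when `m` is fixed, and any balanced word
cancels completely. -/

namespace Bar

variable {X : Type*}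

@[simp]
theorem inv_inv (a : Bar X) : a.inv.inv = a := by
  cases a <;> rfl

@[simp]
theorem inv_eq_e_iff {a : Bar X} : a.inv = e ↔ a = e := by
  cases a <;> simp [Bar.inv]

end Bar

section Reduction

variable {X : Type*} [DecidableEq X]

theorem reduceWord_cons_congr {s t : Word X} (a : Bar X) (h : reduceWord s = reduceWord t) :
    reduceWord (a :: s) = reduceWord (a :: t) := by
  rw [reduceWord, reduceWord, h]

theorem reduceWord_e_cons (w : Word X) : reduceWord (Bar.e :: w) = reduceWord w := by
  rw [reduceWord]
  split <;> simp_all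

theorem isChain_reduceWord (w : Word X) :
    (reduceWord w).IsChain (fun a b => b ≠ a.inv) := by
  induction w with
  | nil => exact .nil
  | cons a w ih =>
    rw [reduceWord]
    split
    · split
      · exact .nil
      · exact .singleton a
    · rename_i b t hbt
      rw [hbt] at ih
      split_ifs with ha hb
      · exact ih
      · exact ih.tail
      · exact ih.cons_cons hb

theorem reduceWord_cons_inv_cons (a : Bar X) (w : Word X) :
    reduceWord (a :: a.inv :: w) = reduceWord w := by
  by_cases ha : a = Bar.e
  · subst ha
    exact (reduceWord_e_cons _).trans (reduceWord_e_cons w)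
  have hchain := isChain_reduceWord w
  rcases hr : reduceWord w with _ | ⟨c, _ | ⟨c', s⟩⟩ <;> rw [hr] at hchain
  · simp [reduceWord, hr, ha]
  · by_cases hc : c = a <;> simp [reduceWord, hr, ha, hc]
  · by_cases hc : c = a
    · subst hc
      simp [reduceWord, hr, ha, List.rel_of_isChain_cons_cons hchain]
    · simp [reduceWord, hr, ha, hc]

end Reduction

inductive Word.Balanced {X : Type*} : Word X → Prop
  | nil : Balanced []
  | e_cons {v : Word X} : Balanced v → Balanced (Bar.e :: v)
  | pair (a : Bar X) {u v : Word X} : Balanced u → Balanced v → Balanced (a :: u ++ a.inv :: v)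

theorem Word.Balanced.reduceWord_append {X : Type*} [DecidableEq X] {s : Word X}
    (hs : s.Balanced) (t : Word X) : reduceWord (s ++ t) = reduceWord t := by
  induction hs generalizing t with
  | nil => rfl
  | e_cons _ ih => exact (reduceWord_e_cons _).trans (ih t)
  | @pair a u v _ _ ihu ihv =>
    calc reduceWord (a :: (u ++ a.inv :: v) ++ t)
        = reduceWord (a :: a.inv :: (v ++ t)) := by
          simpa using reduceWord_cons_congr a (ihu (a.inv :: (v ++ t)))
      _ = reduceWord t := (reduceWord_cons_inv_cons a _).trans (ihv t)

theorem Word.Balanced.reduceWord_eq_nil {X : Type*} [DecidableEq X] {s : Word X}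
    (hs : s.Balanced) : reduceWord s = [] := by
  simpa [reduceWord] using hs.reduceWord_append []

namespace IsMatch

variable {m n : ℕ} {θ : ℕ → ℕ}

theorem mono {m' n' : ℕ} (hθ : IsMatch m n θ) (hm : m ≤ m') (hn : n' ≤ n)
    (hmaps : ∀ i, m' ≤ i → i ≤ n' → m' ≤ θ i ∧ θ i ≤ n') : IsMatch m' n' θ := by
  obtain ⟨-, hinv, hnc⟩ := hθ
  refine ⟨hmaps, fun i hi hi' => hinv i (by omega) (by omega), ?_⟩
  rintro ⟨i, j, hi, hij, hj, hjθ, hθθ⟩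
  exact hnc ⟨i, j, by omega, hij, by omega, hjθ, hθθ⟩

theorem between (hθ : IsMatch m n θ) (hm : m ≤ n) : IsMatch (m + 1) (θ m - 1) θ := by
  obtain ⟨hb, hinv, hnc⟩ := hθ
  have hθm := hb m le_rfl hm
  refine IsMatch.mono ⟨hb, hinv, hnc⟩ (by omega) (by omega) fun i hi hi' => ?_
  have hθi := hb i (by omega) (by omega)
  have hθθi := hinv i (by omega) (by omega)
  have hne_m : θ i ≠ m := fun h => by rw [h] at hθθi; omega
  have hne_θm : θ i ≠ θ m := fun h => by rw [h, hinv m le_rfl hm] at hθθi; omega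
  have hnot_gt : ¬ θ m < θ i := fun h => hnc ⟨m, i, le_rfl, by omega, by omega, by omega, h⟩
  omega

theorem after (hθ : IsMatch m n θ) (hm : m ≤ n) : IsMatch (θ m + 1) n θ := by
  obtain ⟨hb, hinv, hnc⟩ := hθ
  have hθm := hb m le_rfl hm
  refine IsMatch.mono ⟨hb, hinv, hnc⟩ (by omega) le_rfl fun i hi hi' => ?_
  have hθi := hb i (by omega) hi'
  have hθθi := hinv i (by omega) hi'
  have hne_m : θ i ≠ m := fun h => by rw [h] at hθθi; omega
  have hne_θm : θ i ≠ θ m := fun h => by rw [h, hinv m le_rfl hm] at hθθi; omega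
  have hnot_lt : ¬ θ i < θ m := fun h =>
    hnc ⟨m, θ i, le_rfl, by omega, by omega, h, by omega⟩
  omega

end IsMatch

theorem List.range'_eq_append_cons {m k n : ℕ} (hmk : m ≤ k) (hkn : k ≤ n) :
    List.range' m (n + 1 - m) = List.range' m (k - m) ++ k :: List.range' (k + 1) (n - k) := by
  obtain ⟨d, rfl⟩ := Nat.exists_eq_add_of_le hmk
  rw [← List.range'_succ, Nat.add_sub_cancel_left, List.range'_append_1]
  congr 1
  omega

theorem Word.balanced_map_range' {X : Type*} (f : ℕ → Bar X) {m n : ℕ} {θ : ℕ → ℕ}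
    (hθ : IsMatch m n θ) (hfix : ∀ i, m ≤ i → i ≤ n → θ i = i → f i = Bar.e)
    (hpair : ∀ i, m ≤ i → i ≤ n → i < θ i → f (θ i) = (f i).inv) :
    Word.Balanced ((List.range' m (n + 1 - m)).map f) := by
  rcases lt_or_ge n m with hnm | hmn
  · rw [show n + 1 - m = 0 by omega]
    exact .nil
  obtain ⟨hmk, hkn⟩ := hθ.1 m le_rfl hmn
  have hafter : Word.Balanced ((List.range' (θ m + 1) (n + 1 - (θ m + 1))).map f) :=
    balanced_map_range' f (hθ.after hmn) (fun i hi hi' => hfix i (by omega) hi')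
      (fun i hi hi' => hpair i (by omega) hi')
  rw [List.range'_eq_append_cons hmk hkn, show n - θ m = n + 1 - (θ m + 1) by omega,
    List.map_append, List.map_cons]
  rcases hmk.eq_or_lt with hfixed | hlt
  · rw [← hfixed] at hafter ⊢
    rw [Nat.sub_self, List.range'_zero, List.map_nil, List.nil_append,
      hfix m le_rfl hmn hfixed.symm]
    exact hafter.e_cons
  · have hbetween : Word.Balanced ((List.range' (m + 1) (θ m - 1 + 1 - (m + 1))).map f) :=
      balanced_map_range' f (hθ.between hmn) (fun i hi hi' => hfix i (by omega) (by omega))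
        (fun i hi hi' => hpair i (by omega) (by omega))
    rw [show θ m - m = θ m - 1 + 1 - (m + 1) + 1 by omega, List.range'_succ, List.map_cons,
      hpair m le_rfl hmn hlt]
    exact .pair _ hbetween hafter
termination_by n + 1 - m

section WordMatch

variable {X : Type*} (θ : ℕ → ℕ) (w : Word X)

def wordMatchLetter (i : ℕ) : Bar X :=
  if i < θ i then w.getD i Bar.e
  else if θ i = i then Bar.e
  else Bar.inv (w.getD (θ i) Bar.e)

theorem wordMatch_eq_map : wordMatch θ w = (List.range w.length).map (wordMatchLetter θ w) :=
  rfl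

variable {θ w} {i : ℕ}

theorem wordMatchLetter_of_eq (h : θ i = i) : wordMatchLetter θ w i = Bar.e := by
  simp [wordMatchLetter, h]

theorem wordMatchLetter_partner (hi : i < θ i) (hθθ : θ (θ i) = i) :
    wordMatchLetter θ w (θ i) = (wordMatchLetter θ w i).inv := by
  rw [wordMatchLetter, wordMatchLetter, hθθ, if_pos hi, if_neg (by omega), if_neg (by omega)]

end WordMatch

theorem stmt15_general {X : Type*} [DecidableEq X] (w : Word X) (n : ℕ)
    (hlen : w.length = n + 1)
    (θ : ℕ → ℕ) (hθ : IsMatch 0 n θ) :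
    reduceWord (wordMatch θ w) = [] := by
  have hbalanced := Word.balanced_map_range' (wordMatchLetter θ w) hθ
    (fun _ _ _ => wordMatchLetter_of_eq)
    (fun i _ hi hlt => wordMatchLetter_partner hlt (hθ.2.1 i (Nat.zero_le i) hi))
  rw [Nat.sub_zero, ← hlen, ← List.range_eq_range', ← wordMatch_eq_map] at hbalanced
  exact hbalanced.reduceWord_eq_nil

/-- for any reduced word w = x₀⋯x_n and any match θ on {0,...,n}, the word
w^θ reduces to the neutral element e of F(X) (the empty reduced word). -/
theorem stmt15 {X : Type*} [DecidableEq X] (w : Word X) (n : ℕ)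
    (hw : Reduced w) (hlen : w.length = n + 1)
    (θ : ℕ → ℕ) (hθ : IsMatch 0 n θ) :
    reduceWord (wordMatch θ w) = [] :=
  stmt15_general w n hlen θ hθ
end

section
/- Let (X, d) be a metric space with d ≤ 1 and δ the Graev metric on F(X). Then δ extends d: for all x, y ∈ X, δ(x, y) = d(x, y), where x, y are viewed as length-one words in F(X). -/
/-! On the two-point interval `{0, 1}` the only matches are the identity and the
transposition, so the Graev norm of a two-letter word `a b` is the smaller of
`ρ(ab, ee) = d̄(a, e) + d̄(b, e)` and `ρ(ab, aa⁻¹) = d̄(a, a) + d̄(b, a⁻¹)`. For `x ≠ y` the word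
`x⁻¹ y` is already reduced, the first option costs `2`, and the second costs
`d(x, x) + d(y, x) = d(x, y) ≤ 1`. -/

namespace Bar

variable {X : Type*}

@[simp]
theorem inv_pos (x : X) : (pos x).inv = neg x := rfl

@[simp]
theorem inv_neg (x : X) : (neg x).inv = pos x := rfl

end Bar

section Reduction

variable {X : Type*} [DecidableEq X]

theorem reduceWord_wordInv_singleton_append_self (a : X) :
    reduceWord (wordInv [Bar.pos a] ++ [Bar.pos a]) = [] := by
  simp [wordInv, reduceWord]

theorem reduceWord_wordInv_singleton_append_of_ne {a b : X} (hab : a ≠ b) :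
    reduceWord (wordInv [Bar.pos a] ++ [Bar.pos b]) = [Bar.neg a, Bar.pos b] := by
  simp [wordInv, reduceWord, Ne.symm hab]

end Reduction

theorem IsMatch.id (m n : ℕ) : IsMatch m n id :=
  ⟨fun _ h₁ h₂ => ⟨h₁, h₂⟩, fun _ _ _ => rfl, fun ⟨_, _, _, _, _, h₁, h₂⟩ => by simp_all; omega⟩

theorem isMatch_zero_one_swap : IsMatch 0 1 (fun i => 1 - i) :=
  ⟨fun _ _ _ => by dsimp only; omega, fun _ _ _ => by dsimp only; omega,
    fun ⟨_, _, _, _, _, h₁, h₂⟩ => by dsimp only at h₁ h₂; omega⟩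

theorem IsMatch.eq_id_or_swap_of_zero_one {θ : ℕ → ℕ} (hθ : IsMatch 0 1 θ) :
    (θ 0 = 0 ∧ θ 1 = 1) ∨ (θ 0 = 1 ∧ θ 1 = 0) := by
  obtain ⟨hrange, hinv, -⟩ := hθ
  have h₀ := (hrange 0 le_rfl zero_le_one).2
  have h₁ := (hrange 1 zero_le_one le_rfl).2
  have hinv₀ := hinv 0 le_rfl zero_le_one
  have hinv₁ := hinv 1 zero_le_one le_rfl
  interval_cases h : θ 0 <;> interval_cases h' : θ 1 <;> simp_all

section GraevNorm

variable {X : Type*} (d : X → X → ℝ)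

theorem graevNorm_nil : graevNorm d [] = 0 := by
  have hset : {r : ℝ | ∃ θ : ℕ → ℕ, IsMatch 0 (([] : Word X).length - 1) θ ∧
      r = rho d [] (wordMatch θ [])} = {0} := by
    ext r
    constructor
    · rintro ⟨θ, -, rfl⟩
      simp [rho, wordMatch]
    · rintro rfl
      exact ⟨id, IsMatch.id _ _, by simp [rho, wordMatch]⟩
  rw [graevNorm, hset, csInf_singleton]

theorem wordMatch_pair_of_id {θ : ℕ → ℕ} (h₀ : θ 0 = 0) (h₁ : θ 1 = 1) (a b : Bar X) :
    wordMatch θ [a, b] = [Bar.e, Bar.e] := by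
  simp [wordMatch, List.range_succ, h₀, h₁]

theorem wordMatch_pair_of_swap {θ : ℕ → ℕ} (h₀ : θ 0 = 1) (h₁ : θ 1 = 0) (a b : Bar X) :
    wordMatch θ [a, b] = [a, a.inv] := by
  simp [wordMatch, List.range_succ, h₀, h₁]

theorem graevNorm_pair (a b : Bar X) :
    graevNorm d [a, b] =
      min (barDist d a .e + barDist d b .e) (barDist d a a + barDist d b a.inv) := by
  have hset : {r : ℝ | ∃ θ : ℕ → ℕ, IsMatch 0 ([a, b].length - 1) θ ∧
      r = rho d [a, b] (wordMatch θ [a, b])} =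
      {barDist d a .e + barDist d b .e, barDist d a a + barDist d b a.inv} := by
    ext r
    constructor
    · rintro ⟨θ, hθ, rfl⟩
      rcases hθ.eq_id_or_swap_of_zero_one with ⟨h₀, h₁⟩ | ⟨h₀, h₁⟩
      · simp [wordMatch_pair_of_id h₀ h₁, rho]
      · simp [wordMatch_pair_of_swap h₀ h₁, rho]
    · rintro (rfl | rfl)
      · exact ⟨id, IsMatch.id _ _, by simp [wordMatch_pair_of_id, rho]⟩
      · exact ⟨_, isMatch_zero_one_swap, by simp [wordMatch_pair_of_swap, rho]⟩
  rw [graevNorm, hset, csInf_pair]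

end GraevNorm

theorem stmt16_general {X : Type*} [DecidableEq X] (d : X → X → ℝ)
    (hrefl : ∀ x, d x x = 0)
    (hsymm : ∀ x y, d x y = d y x)
    (hbd : ∀ x y, d x y ≤ 1) (x y : X) :
    graevDist d [Bar.pos x] [Bar.pos y] = d x y := by
  by_cases hxy : x = y
  · subst hxy
    rw [graevDist, reduceWord_wordInv_singleton_append_self, graevNorm_nil, hrefl]
  · rw [graevDist, reduceWord_wordInv_singleton_append_of_ne hxy, graevNorm_pair]
    simp only [barDist, Bar.inv_neg, hrefl, hsymm y x, zero_add]
    exact min_eq_right (by linarith [hbd x y])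

/-- the Graev metric δ on F(X) extends d: for x, y ∈ X viewed as
length-one words, δ(x, y) = d(x, y). -/
theorem stmt16 {X : Type*} [DecidableEq X] (d : X → X → ℝ)
    (hrefl : ∀ x, d x x = 0) (heq : ∀ x y, d x y = 0 → x = y)
    (hsymm : ∀ x y, d x y = d y x) (htri : ∀ x y z, d x z ≤ d x y + d y z)
    (hbd : ∀ x y, d x y ≤ 1) (x y : X) :
    graevDist d [Bar.pos x] [Bar.pos y] = d x y :=
  stmt16_general d hrefl hsymm hbd x y
end
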